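/- Let L = (ab)⁺(ac)⁺aa + (ba)⁺(ca)⁺ + aa + aaa over Σ = {a,b,c}. Then ufs(L) ∩ aa(ab)⁺(ac)⁺aa(ba)⁺(ca)⁺aaa = { aa (ab)^r (ac)^s aa (ba)^r (ca)^s aaa : r, s ≥ 1 }, which is not context-free; hence ufs of a regular language need not be context-free. -/

import Mathlib

open Computability

/-- `l` is a factorization of `x` into elements of `L`. -/
def IsFactorization {α : Type*} (L : Language α) (x : List α) (l : List (List α)) : Prop :=
  (∀ w ∈ l, w ∈ L) ∧ l.flatten = x

/-- The set of words of `L∗` having subset-invariant factorization: there is a subset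
`S ⊆ L` such that every factorization of `x` into elements of `L` uses exactly the
elements of `S`. -/
def ufs {α : Type*} (L : Language α) : Language α :=
  {x | x ∈ L∗ ∧ ∃ S : Set (List α), S ⊆ L ∧
    ∀ l, IsFactorization L x l → {w | w ∈ l} = S}

/-- The alphabet `{a,b,c}` is encoded as `Fin 3` with `a = 0`, `b = 1`, `c = 2`.
`L17` is the regular language `(ab)⁺(ac)⁺aa + (ba)⁺(ca)⁺ + aa + aaa`. -/
def L17 : Language (Fin 3) := show Set (List (Fin 3)) from
  {w | ∃ i j, 1 ≤ i ∧ 1 ≤ j ∧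
    w = (List.replicate i [0, 1]).flatten ++ (List.replicate j [0, 2]).flatten ++ [0, 0]} ∪
  {w | ∃ i j, 1 ≤ i ∧ 1 ≤ j ∧
    w = (List.replicate i [1, 0]).flatten ++ (List.replicate j [2, 0]).flatten} ∪
  {[0, 0], [0, 0, 0]}

/-- The word `aa (ab)^r (ac)^s aa (ba)^t (ca)^q aaa`. -/
def w17 (r s t q : ℕ) : List (Fin 3) :=
  [0, 0] ++ (List.replicate r [0, 1]).flatten ++ (List.replicate s [0, 2]).flatten ++
    [0, 0] ++ (List.replicate t [1, 0]).flatten ++ (List.replicate q [2, 0]).flatten ++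
    [0, 0, 0]

namespace Ufs17

/-- `(xy)^n`. -/
def rep2 (x y : Fin 3) (n : ℕ) : List (Fin 3) := (List.replicate n [x, y]).flatten

lemma rep2_zero (x y : Fin 3) : rep2 x y 0 = [] := rfl

lemma rep2_succ (x y : Fin 3) (n : ℕ) : rep2 x y (n+1) = x :: y :: rep2 x y n := by
  simp [rep2, List.replicate_succ]

lemma rep2_succ_append (x y : Fin 3) (n : ℕ) (l : List (Fin 3)) :
    rep2 x y (n+1) ++ l = x :: y :: (rep2 x y n ++ l) := by
  simp [rep2_succ]

lemma rep2_length (x y : Fin 3) (n : ℕ) : (rep2 x y n).length = 2 * n := by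
  induction n with
  | zero => rfl
  | succ n ih => rw [rep2_succ]; simp [ih]; omega

/-- shuffle: `(xy)^n x = x (yx)^n`. -/
lemma shuf (x y : Fin 3) (n : ℕ) (l : List (Fin 3)) :
    rep2 x y n ++ (x :: l) = x :: (rep2 y x n ++ l) := by
  induction n generalizing l with
  | zero => simp [rep2_zero]
  | succ n ih =>
      rw [rep2_succ_append, ih, rep2_succ_append]

/-- Splitting lemma for equal concatenations of a repeated block. -/
lemma split {α : Type*} (P : List α) :
    ∀ (i r : ℕ) (A B : List α),
    (List.replicate i P).flatten ++ A = (List.replicate r P).flatten ++ B →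
    (∃ k, i = r + k ∧ (List.replicate k P).flatten ++ A = B) ∨
    (∃ k, r = i + k ∧ 0 < k ∧ A = (List.replicate k P).flatten ++ B) := by
  intro i r
  induction r generalizing i with
  | zero =>
      intro A B h
      left
      exact ⟨i, by omega, by simpa using h⟩
  | succ r ih =>
      intro A B h
      cases i with
      | zero =>
          right
          exact ⟨r + 1, by omega, by omega, by simpa using h⟩
      | succ i =>
          simp only [List.replicate_succ, List.flatten_cons, List.append_assoc] at h
          have h' := List.append_cancel_left h
          rcases ih i A B h' with ⟨k, hk, he⟩ | ⟨k, hk, hk0, he⟩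
          · exact Or.inl ⟨k, by omega, he⟩
          · exact Or.inr ⟨k, by omega, hk0, he⟩

lemma rep2_split (x y : Fin 3) (i r : ℕ) (A B : List (Fin 3))
    (h : rep2 x y i ++ A = rep2 x y r ++ B) :
    (∃ k, i = r + k ∧ rep2 x y k ++ A = B) ∨
    (∃ k, r = i + k ∧ 0 < k ∧ A = rep2 x y k ++ B) :=
  split [x, y] i r A B h

/-- `(ab)^r (ac)^s aa`. -/
def T1 (r s : ℕ) : List (Fin 3) := rep2 0 1 r ++ rep2 0 2 s ++ [0, 0]

/-- `(ba)^t (ca)^q`. -/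
def T2 (t q : ℕ) : List (Fin 3) := rep2 1 0 t ++ rep2 2 0 q

lemma mem_L17_iff (f : List (Fin 3)) :
    f ∈ L17 ↔ (∃ i j, 1 ≤ i ∧ 1 ≤ j ∧ f = T1 i j) ∨ (∃ i j, 1 ≤ i ∧ 1 ≤ j ∧ f = T2 i j) ∨
      f = [0, 0] ∨ f = [0, 0, 0] := by
  show f ∈ (_ ∪ _ ∪ _ : Set (List (Fin 3))) ↔ _
  simp only [Set.mem_union, Set.mem_setOf_eq, Set.mem_insert_iff, Set.mem_singleton_iff]
  constructor
  · rintro ((h | h) | h)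
    · exact Or.inl h
    · exact Or.inr (Or.inl h)
    · exact Or.inr (Or.inr h)
  · rintro (h | h | h)
    · exact Or.inl (Or.inl h)
    · exact Or.inl (Or.inr h)
    · exact Or.inr h

lemma w17_eq (r s t q : ℕ) :
    w17 r s t q = [0, 0] ++ (T1 r s ++ (T2 t q ++ [0, 0, 0])) := by
  simp [w17, T1, T2, rep2]

/-- The second factorization shape. -/
lemma w17_eq' (r s t q : ℕ) :
    w17 r s t q = [0, 0, 0] ++ (T2 r s ++ (T1 t q ++ [0, 0])) := by
  rw [w17_eq]
  simp only [T1, T2, List.append_assoc, List.cons_append, List.nil_append]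
  rw [shuf 0 2 q, shuf 0 1 t, shuf 0 2 s, shuf 0 1 r]

end Ufs17

namespace Ufs17

/-- factor lists -/
def Fact (l : List (List (Fin 3))) : Prop := ∀ f ∈ l, f ∈ L17

lemma two_le_length {f : List (Fin 3)} (hf : f ∈ L17) : 2 ≤ f.length := by
  rcases (mem_L17_iff f).1 hf with ⟨i,j,hi,hj,rfl⟩|⟨i,j,hi,hj,rfl⟩|rfl|rfl
  · simp [T1, rep2_length]; omega
  · simp [T2, rep2_length]; omega
  · simp
  · simp

lemma head01 {f : List (Fin 3)} (hf : f ∈ L17) : ∃ f', f = 0 :: f' ∨ f = 1 :: f' := by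
  rcases (mem_L17_iff f).1 hf with ⟨i,j,hi,hj,rfl⟩|⟨i,j,hi,hj,rfl⟩|rfl|rfl
  · obtain ⟨i, rfl⟩ : ∃ i', i = i' + 1 := ⟨i - 1, by omega⟩
    refine ⟨1 :: (rep2 0 1 i ++ (rep2 0 2 j ++ [0,0])), Or.inl ?_⟩
    simp [T1, rep2_succ_append, List.append_assoc]
  · obtain ⟨i, rfl⟩ : ∃ i', i = i' + 1 := ⟨i - 1, by omega⟩
    refine ⟨0 :: (rep2 1 0 i ++ rep2 2 0 j), Or.inr ?_⟩
    simp [T2, rep2_succ_append, List.append_assoc]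
  · exact ⟨_, Or.inl rfl⟩
  · exact ⟨_, Or.inl rfl⟩

lemma no2 {l : List (List (Fin 3))} (hl : Fact l) (X : List (Fin 3)) :
    l.flatten ≠ 2 :: X := by
  cases l with
  | nil => simp
  | cons f l' =>
      obtain ⟨f', hf'⟩ := head01 (hl f (by simp))
      rcases hf' with rfl | rfl <;> simp

lemma flat_nil {l : List (List (Fin 3))} (hl : Fact l) (h : l.flatten = []) : l = [] := by
  cases l with
  | nil => rfl
  | cons f l' =>
      exfalso
      have h2 := two_le_length (hl f (by simp))
      have : f = [] := (List.flatten_eq_nil_iff.1 h) f (by simp)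
      simp [this] at h2

lemma F1 {i j r s : ℕ} (hi : 1 ≤ i) (hj : 1 ≤ j) (hr : 1 ≤ r) (hs : 1 ≤ s)
    {rest X : List (Fin 3)} (h : T1 i j ++ rest = T1 r s ++ X) :
    i = r ∧ j = s ∧ rest = X := by
  have h' : rep2 0 1 i ++ (rep2 0 2 j ++ ([0,0] ++ rest))
      = rep2 0 1 r ++ (rep2 0 2 s ++ ([0,0] ++ X)) := by
    simpa [T1, List.append_assoc] using h
  rcases rep2_split 0 1 i r _ _ h' with ⟨k, hk, he⟩ | ⟨k, hk, hk0, he⟩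
  · rcases Nat.eq_zero_or_pos k with rfl | hk0
    · rw [rep2_zero, List.nil_append] at he
      rcases rep2_split 0 2 j s _ _ he with ⟨k', hk', he'⟩ | ⟨k', hk', hk'0, he'⟩
      · rcases Nat.eq_zero_or_pos k' with rfl | hk'0
        · rw [rep2_zero, List.nil_append] at he'
          exact ⟨by omega, by omega, by simpa using he'⟩
        · exfalso
          obtain ⟨k'', rfl⟩ : ∃ m, k' = m + 1 := ⟨k' - 1, by omega⟩
          rw [rep2_succ_append] at he'
          simp at he'
      · exfalso
        obtain ⟨k'', rfl⟩ : ∃ m, k' = m + 1 := ⟨k' - 1, by omega⟩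
        rw [rep2_succ_append] at he'
        simp at he'
    · exfalso
      obtain ⟨k', rfl⟩ : ∃ m, k = m + 1 := ⟨k - 1, by omega⟩
      obtain ⟨s', rfl⟩ : ∃ m, s = m + 1 := ⟨s - 1, by omega⟩
      rw [rep2_succ_append] at he
      rw [rep2_succ_append] at he
      simp at he
  · exfalso
    obtain ⟨k', rfl⟩ : ∃ m, k = m + 1 := ⟨k - 1, by omega⟩
    obtain ⟨j', rfl⟩ : ∃ m, j = m + 1 := ⟨j - 1, by omega⟩
    rw [rep2_succ_append] at he
    rw [rep2_succ_append] at he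
    simp at he

lemma F2 {i j t q : ℕ} (hi : 1 ≤ i) (hj : 1 ≤ j) (ht : 1 ≤ t) (hq : 1 ≤ q)
    {rest X : List (Fin 3)} (hX : ∃ X', X = 0 :: X')
    (h : T2 i j ++ rest = T2 t q ++ X) :
    i = t ∧ ((j = q ∧ rest = X) ∨ ∃ k, 0 < k ∧ q = j + k ∧ rest = rep2 2 0 k ++ X) := by
  have h' : rep2 1 0 i ++ (rep2 2 0 j ++ rest)
      = rep2 1 0 t ++ (rep2 2 0 q ++ X) := by
    simpa [T2, List.append_assoc] using h
  rcases rep2_split 1 0 i t _ _ h' with ⟨k, hk, he⟩ | ⟨k, hk, hk0, he⟩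
  · rcases Nat.eq_zero_or_pos k with rfl | hk0
    · rw [rep2_zero, List.nil_append] at he
      refine ⟨by omega, ?_⟩
      rcases rep2_split 2 0 j q _ _ he with ⟨k', hk', he'⟩ | ⟨k', hk', hk'0, he'⟩
      · rcases Nat.eq_zero_or_pos k' with rfl | hk'0
        · rw [rep2_zero, List.nil_append] at he'
          exact Or.inl ⟨by omega, he'⟩
        · exfalso
          obtain ⟨k'', rfl⟩ : ∃ m, k' = m + 1 := ⟨k' - 1, by omega⟩
          obtain ⟨X', rfl⟩ := hX
          rw [rep2_succ_append] at he'
          simp at he'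
      · exact Or.inr ⟨k', hk'0, by omega, he'⟩
    · exfalso
      obtain ⟨k', rfl⟩ : ∃ m, k = m + 1 := ⟨k - 1, by omega⟩
      obtain ⟨q', rfl⟩ : ∃ m, q = m + 1 := ⟨q - 1, by omega⟩
      rw [rep2_succ_append] at he
      rw [rep2_succ_append] at he
      simp at he
  · exfalso
    obtain ⟨k', rfl⟩ : ∃ m, k = m + 1 := ⟨k - 1, by omega⟩
    obtain ⟨j', rfl⟩ : ∃ m, j = m + 1 := ⟨j - 1, by omega⟩
    rw [rep2_succ_append] at he
    rw [rep2_succ_append] at he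
    simp at he

end Ufs17

namespace Ufs17

lemma fact_tail {f : List (Fin 3)} {l : List (List (Fin 3))} (hl : Fact (f :: l)) : Fact l :=
  fun g hg => hl g (List.mem_cons_of_mem _ hg)

lemma fset_cons (f : List (Fin 3)) (l : List (List (Fin 3))) :
    {w | w ∈ f :: l} = insert f {w | w ∈ l} := by
  ext x; simp [List.mem_cons]

lemma flat_single {l : List (List (Fin 3))} (hl : Fact l) (x : Fin 3) : l.flatten ≠ [x] := by
  cases l with
  | nil => simp
  | cons f l' =>
      intro h
      have h2 := two_le_length (hl f (by simp))
      have := congrArg List.length h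
      simp at this
      omega

/-- C6 -/
lemma C6 {l : List (List (Fin 3))} (hl : Fact l) (h : l.flatten = [0, 0]) :
    {w | w ∈ l} = ({[0, 0]} : Set (List (Fin 3))) := by
  cases l with
  | nil => simp at h
  | cons f l' =>
      rw [List.flatten_cons] at h
      rcases (mem_L17_iff f).1 (hl f (by simp)) with ⟨i,j,hi,hj,rfl⟩|⟨i,j,hi,hj,rfl⟩|rfl|rfl
      · obtain ⟨i, rfl⟩ : ∃ m, i = m + 1 := ⟨i - 1, by omega⟩
        simp [T1, rep2_succ_append, List.append_assoc] at h
      · obtain ⟨i, rfl⟩ : ∃ m, i = m + 1 := ⟨i - 1, by omega⟩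
        simp [T2, rep2_succ_append, List.append_assoc] at h
      · have hf : l'.flatten = [] := by simpa using h
        rw [flat_nil (fact_tail hl) hf]
        ext x; simp
      · simp at h

/-- C3 -/
lemma C3 {l : List (List (Fin 3))} (hl : Fact l) (h : l.flatten = [0, 0, 0]) :
    {w | w ∈ l} = ({[0, 0, 0]} : Set (List (Fin 3))) := by
  cases l with
  | nil => simp at h
  | cons f l' =>
      rw [List.flatten_cons] at h
      rcases (mem_L17_iff f).1 (hl f (by simp)) with ⟨i,j,hi,hj,rfl⟩|⟨i,j,hi,hj,rfl⟩|rfl|rfl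
      · obtain ⟨i, rfl⟩ : ∃ m, i = m + 1 := ⟨i - 1, by omega⟩
        simp [T1, rep2_succ_append, List.append_assoc] at h
      · obtain ⟨i, rfl⟩ : ∃ m, i = m + 1 := ⟨i - 1, by omega⟩
        simp [T2, rep2_succ_append, List.append_assoc] at h
      · exfalso
        have hf : l'.flatten = [0] := by simpa using h
        exact flat_single (fact_tail hl) 0 hf
      · have hf : l'.flatten = [] := by simpa using h
        rw [flat_nil (fact_tail hl) hf]
        ext x; simp

/-- C2 -/
lemma C2 {r s : ℕ} (hr : 1 ≤ r) (hs : 1 ≤ s) {l : List (List (Fin 3))} (hl : Fact l)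
    (h : l.flatten = T2 r s ++ [0, 0, 0]) :
    {w | w ∈ l} = ({T2 r s, [0, 0, 0]} : Set (List (Fin 3))) := by
  obtain ⟨r', hr'⟩ : ∃ m, r = m + 1 := ⟨r - 1, by omega⟩
  cases l with
  | nil => subst hr'; rw [List.flatten_nil] at h; simp [T2, rep2_succ_append] at h
  | cons f l' =>
      rw [List.flatten_cons] at h
      rcases (mem_L17_iff f).1 (hl f (by simp)) with ⟨i,j,hi,hj,rfl⟩|⟨i,j,hi,hj,rfl⟩|rfl|rfl
      · exfalso
        obtain ⟨i, rfl⟩ : ∃ m, i = m + 1 := ⟨i - 1, by omega⟩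
        subst hr'
        simp [T1, T2, rep2_succ_append, List.append_assoc] at h
      · obtain ⟨hi', hrest⟩ := F2 hi hj hr hs ⟨[0,0], rfl⟩ h
        subst hi'
        rcases hrest with ⟨rfl, hrest⟩ | ⟨k, hk0, hk, hrest⟩
        · rw [fset_cons, C3 (fact_tail hl) hrest]
        · exfalso
          obtain ⟨k', rfl⟩ : ∃ m, k = m + 1 := ⟨k - 1, by omega⟩
          rw [rep2_succ_append] at hrest
          exact no2 (fact_tail hl) _ hrest
      · exfalso; subst hr'; simp [T2, rep2_succ_append, List.append_assoc] at h
      · exfalso; subst hr'; simp [T2, rep2_succ_append, List.append_assoc] at h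

/-- C1 -/
lemma C1 {r s : ℕ} (hr : 1 ≤ r) (hs : 1 ≤ s) {l : List (List (Fin 3))} (hl : Fact l)
    (h : l.flatten = T1 r s ++ (T2 r s ++ [0, 0, 0])) :
    {w | w ∈ l} = ({T1 r s, T2 r s, [0, 0, 0]} : Set (List (Fin 3))) := by
  obtain ⟨r', hr'⟩ : ∃ m, r = m + 1 := ⟨r - 1, by omega⟩
  cases l with
  | nil => subst hr'; rw [List.flatten_nil] at h; simp [T1, rep2_succ_append, List.append_assoc] at h
  | cons f l' =>
      rw [List.flatten_cons] at h
      rcases (mem_L17_iff f).1 (hl f (by simp)) with ⟨i,j,hi,hj,rfl⟩|⟨i,j,hi,hj,rfl⟩|rfl|rfl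
      · obtain ⟨hi', hj', hrest⟩ := F1 hi hj hr hs h
        subst hi'; subst hj'
        rw [fset_cons, C2 hr hs (fact_tail hl) hrest]
      · exfalso
        obtain ⟨i, rfl⟩ : ∃ m, i = m + 1 := ⟨i - 1, by omega⟩
        subst hr'
        simp [T1, T2, rep2_succ_append, List.append_assoc] at h
      · exfalso; subst hr'; simp [T1, rep2_succ_append, List.append_assoc] at h
      · exfalso; subst hr'; simp [T1, rep2_succ_append, List.append_assoc] at h

/-- C5 -/
lemma C5 {r s : ℕ} (hr : 1 ≤ r) (hs : 1 ≤ s) {l : List (List (Fin 3))} (hl : Fact l)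
    (h : l.flatten = T1 r s ++ [0, 0]) :
    {w | w ∈ l} = ({T1 r s, [0, 0]} : Set (List (Fin 3))) := by
  obtain ⟨r', hr'⟩ : ∃ m, r = m + 1 := ⟨r - 1, by omega⟩
  cases l with
  | nil => subst hr'; rw [List.flatten_nil] at h; simp [T1, rep2_succ_append, List.append_assoc] at h
  | cons f l' =>
      rw [List.flatten_cons] at h
      rcases (mem_L17_iff f).1 (hl f (by simp)) with ⟨i,j,hi,hj,rfl⟩|⟨i,j,hi,hj,rfl⟩|rfl|rfl
      · obtain ⟨hi', hj', hrest⟩ := F1 hi hj hr hs h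
        subst hi'; subst hj'
        rw [fset_cons, C6 (fact_tail hl) hrest]
      · exfalso
        obtain ⟨i, rfl⟩ : ∃ m, i = m + 1 := ⟨i - 1, by omega⟩
        subst hr'
        simp [T1, T2, rep2_succ_append, List.append_assoc] at h
      · exfalso; subst hr'; simp [T1, rep2_succ_append, List.append_assoc] at h
      · exfalso; subst hr'; simp [T1, rep2_succ_append, List.append_assoc] at h

/-- C4 -/
lemma C4 {r s : ℕ} (hr : 1 ≤ r) (hs : 1 ≤ s) {l : List (List (Fin 3))} (hl : Fact l)
    (h : l.flatten = T2 r s ++ (T1 r s ++ [0, 0])) :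
    {w | w ∈ l} = ({T2 r s, T1 r s, [0, 0]} : Set (List (Fin 3))) := by
  obtain ⟨r', hr'⟩ : ∃ m, r = m + 1 := ⟨r - 1, by omega⟩
  have hX : ∃ X', T1 r s ++ [0, 0] = 0 :: X' := by
    subst hr'
    refine ⟨1 :: (rep2 0 1 r' ++ (rep2 0 2 s ++ [0,0,0,0])), ?_⟩
    simp [T1, rep2_succ_append, List.append_assoc]
  cases l with
  | nil => subst hr'; rw [List.flatten_nil] at h; simp [T2, rep2_succ_append] at h
  | cons f l' =>
      rw [List.flatten_cons] at h
      rcases (mem_L17_iff f).1 (hl f (by simp)) with ⟨i,j,hi,hj,rfl⟩|⟨i,j,hi,hj,rfl⟩|rfl|rfl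
      · exfalso
        obtain ⟨i, rfl⟩ : ∃ m, i = m + 1 := ⟨i - 1, by omega⟩
        subst hr'
        simp [T1, T2, rep2_succ_append, List.append_assoc] at h
      · obtain ⟨hi', hrest⟩ := F2 hi hj hr hs hX h
        subst hi'
        rcases hrest with ⟨rfl, hrest⟩ | ⟨k, hk0, hk, hrest⟩
        · rw [fset_cons, C5 hr hs (fact_tail hl) hrest]
        · exfalso
          obtain ⟨k', rfl⟩ : ∃ m, k = m + 1 := ⟨k - 1, by omega⟩
          rw [rep2_succ_append] at hrest
          exact no2 (fact_tail hl) _ hrest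
      · exfalso; subst hr'; simp [T2, rep2_succ_append, List.append_assoc] at h
      · exfalso; subst hr'; simp [T2, rep2_succ_append, List.append_assoc] at h

/-- canonical factor set -/
def S0 (r s : ℕ) : Set (List (Fin 3)) := {[0, 0], T1 r s, T2 r s, [0, 0, 0]}

/-- C0: every factorization of `w17 r s r s` uses exactly `S0 r s`. -/
lemma C0 {r s : ℕ} (hr : 1 ≤ r) (hs : 1 ≤ s) {l : List (List (Fin 3))} (hl : Fact l)
    (h : l.flatten = w17 r s r s) :
    {w | w ∈ l} = S0 r s := by
  obtain ⟨r', hr'⟩ : ∃ m, r = m + 1 := ⟨r - 1, by omega⟩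
  cases l with
  | nil => rw [List.flatten_nil, w17_eq] at h; simp at h
  | cons f l' =>
      rw [List.flatten_cons] at h
      rcases (mem_L17_iff f).1 (hl f (by simp)) with ⟨i,j,hi,hj,rfl⟩|⟨i,j,hi,hj,rfl⟩|rfl|rfl
      · exfalso
        obtain ⟨i, rfl⟩ : ∃ m, i = m + 1 := ⟨i - 1, by omega⟩
        rw [w17_eq] at h
        simp [T1, rep2_succ_append, List.append_assoc] at h
      · exfalso
        obtain ⟨i, rfl⟩ : ∃ m, i = m + 1 := ⟨i - 1, by omega⟩
        rw [w17_eq] at h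
        simp [T2, rep2_succ_append, List.append_assoc] at h
      · rw [w17_eq] at h
        have hrest : l'.flatten = T1 r s ++ (T2 r s ++ [0, 0, 0]) := by simpa using h
        rw [fset_cons, C1 hr hs (fact_tail hl) hrest]
        rfl
      · rw [w17_eq'] at h
        have hrest : l'.flatten = T2 r s ++ (T1 r s ++ [0, 0]) := by simpa using h
        rw [fset_cons, C4 hr hs (fact_tail hl) hrest]
        ext x; simp [S0]; tauto

end Ufs17

namespace Ufs17

lemma T1_mem {r s : ℕ} (hr : 1 ≤ r) (hs : 1 ≤ s) : T1 r s ∈ L17 :=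
  (mem_L17_iff _).2 (Or.inl ⟨r, s, hr, hs, rfl⟩)

lemma T2_mem {r s : ℕ} (hr : 1 ≤ r) (hs : 1 ≤ s) : T2 r s ∈ L17 :=
  (mem_L17_iff _).2 (Or.inr (Or.inl ⟨r, s, hr, hs, rfl⟩))

lemma aa_mem : ([0, 0] : List (Fin 3)) ∈ L17 := (mem_L17_iff _).2 (Or.inr (Or.inr (Or.inl rfl)))

lemma aaa_mem : ([0, 0, 0] : List (Fin 3)) ∈ L17 :=
  (mem_L17_iff _).2 (Or.inr (Or.inr (Or.inr rfl)))

def l₁ (r s t q : ℕ) : List (List (Fin 3)) := [[0, 0], T1 r s, T2 t q, [0, 0, 0]]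

def l₂ (r s t q : ℕ) : List (List (Fin 3)) := [[0, 0, 0], T2 r s, T1 t q, [0, 0]]

lemma l₁_flatten (r s t q : ℕ) : (l₁ r s t q).flatten = w17 r s t q := by
  rw [w17_eq]; simp [l₁]

lemma l₂_flatten (r s t q : ℕ) : (l₂ r s t q).flatten = w17 r s t q := by
  rw [w17_eq']; simp [l₂]

lemma l₁_fact {r s t q : ℕ} (hr : 1 ≤ r) (hs : 1 ≤ s) (ht : 1 ≤ t) (hq : 1 ≤ q) :
    Fact (l₁ r s t q) := by
  intro f hf
  simp [l₁] at hf
  rcases hf with rfl | rfl | rfl | rfl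
  exacts [aa_mem, T1_mem hr hs, T2_mem ht hq, aaa_mem]

lemma l₂_fact {r s t q : ℕ} (hr : 1 ≤ r) (hs : 1 ≤ s) (ht : 1 ≤ t) (hq : 1 ≤ q) :
    Fact (l₂ r s t q) := by
  intro f hf
  simp [l₂] at hf
  rcases hf with rfl | rfl | rfl | rfl
  exacts [aaa_mem, T2_mem hr hs, T1_mem ht hq, aa_mem]

theorem part1 :
    Set.inter (ufs L17)
        {w | ∃ r s t q, 1 ≤ r ∧ 1 ≤ s ∧ 1 ≤ t ∧ 1 ≤ q ∧ w = w17 r s t q} =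
      {w | ∃ r s, 1 ≤ r ∧ 1 ≤ s ∧ w = w17 r s r s} := by
  ext x
  constructor
  · rintro ⟨⟨hstar, S, hSsub, hinv⟩, ⟨r, s, t, q, hr, hs, ht, hq, rfl⟩⟩
    have h₁ := hinv (l₁ r s t q) ⟨l₁_fact hr hs ht hq, l₁_flatten r s t q⟩
    have h₂ := hinv (l₂ r s t q) ⟨l₂_fact hr hs ht hq, l₂_flatten r s t q⟩
    have hmem : T1 r s ∈ {w | w ∈ l₂ r s t q} := by
      rw [h₂, ← h₁]
      simp [l₁]
    simp [l₂] at hmem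
    obtain ⟨r', hr'⟩ : ∃ m, r = m + 1 := ⟨r - 1, by omega⟩
    rcases hmem with he | he | he | he
    · exfalso; rw [hr'] at he; simp [T1, rep2_succ_append, List.append_assoc] at he
    · exfalso; rw [hr'] at he
      obtain ⟨r'', hr''⟩ : ∃ m, r = m + 1 := ⟨r - 1, by omega⟩
      simp [T1, T2, hr'', rep2_succ_append, List.append_assoc] at he
    · obtain ⟨hrt, hsq, -⟩ := F1 hr hs ht hq (show T1 r s ++ ([]:List (Fin 3)) = T1 t q ++ [] by simpa using he)
      exact ⟨r, s, hr, hs, by rw [hrt, hsq]⟩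
    · exfalso; rw [hr'] at he; simp [T1, rep2_succ_append, List.append_assoc] at he
  · rintro ⟨r, s, hr, hs, rfl⟩
    refine ⟨⟨?_, S0 r s, ?_, ?_⟩, r, s, r, s, hr, hs, hr, hs, rfl⟩
    · exact Language.mem_kstar.2 ⟨l₁ r s r s, (l₁_flatten r s r s).symm,
        fun y hy => l₁_fact hr hs hr hs y hy⟩
    · intro f hf
      simp [S0] at hf
      rcases hf with rfl | rfl | rfl | rfl
      exacts [aa_mem, T1_mem hr hs, T2_mem hr hs, aaa_mem]
    · rintro l ⟨hfact, hflat⟩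
      exact C0 hr hs hfact hflat

end Ufs17

namespace Ufs17

universe uN uT

/-- Parse trees for context-free grammars. -/
inductive PTree (T : Type uT) (N : Type uN) where
  | leaf (t : T) : PTree T N
  | node (A : N) (ts : List (PTree T N)) : PTree T N

namespace PTree

variable {T : Type uT} {N : Type uN}

mutual
  def yield : PTree T N → List T
    | .leaf t => [t]
    | .node _ ts => yields ts
  def yields : List (PTree T N) → List T
    | [] => []
    | t :: ts => yield t ++ yields ts
end

def rootSym : PTree T N → Symbol T N
  | .leaf t => .terminal t
  | .node A _ => .nonterminal A

mutual
  def size : PTree T N → ℕ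
    | .leaf _ => 1
    | .node _ ts => 1 + sizes ts
  def sizes : List (PTree T N) → ℕ
    | [] => 0
    | t :: ts => size t + sizes ts
end

mutual
  def height : PTree T N → ℕ
    | .leaf _ => 0
    | .node _ ts => 1 + heights ts
  def heights : List (PTree T N) → ℕ
    | [] => 0
    | t :: ts => max (height t) (heights ts)
end

@[simp] lemma yield_leaf (t : T) : (leaf t : PTree T N).yield = [t] := by simp [yield]
@[simp] lemma yield_node (A : N) (ts) : (node A ts : PTree T N).yield = yields ts := by
  simp [yield]
@[simp] lemma yields_nil : yields ([] : List (PTree T N)) = [] := by simp [yields]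
@[simp] lemma yields_cons (t : PTree T N) (ts) :
    yields (t :: ts) = t.yield ++ yields ts := by simp [yields]

lemma yields_append (l₁ l₂ : List (PTree T N)) :
    yields (l₁ ++ l₂) = yields l₁ ++ yields l₂ := by
  induction l₁ with
  | nil => simp
  | cons t ts ih => simp [ih]

@[simp] lemma sizes_nil : sizes ([] : List (PTree T N)) = 0 := by simp [sizes]
@[simp] lemma sizes_cons (t : PTree T N) (ts) : sizes (t :: ts) = t.size + sizes ts := by
  simp [sizes]
@[simp] lemma size_leaf (t : T) : (leaf t : PTree T N).size = 1 := by simp [size]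
@[simp] lemma size_node (A : N) (ts) : (node A ts : PTree T N).size = 1 + sizes ts := by
  simp [size]

lemma sizes_append (l₁ l₂ : List (PTree T N)) :
    sizes (l₁ ++ l₂) = sizes l₁ + sizes l₂ := by
  induction l₁ with
  | nil => simp
  | cons t ts ih => simp [ih]; omega

@[simp] lemma height_leaf (t : T) : (leaf t : PTree T N).height = 0 := by simp [height]
@[simp] lemma height_node (A : N) (ts) : (node A ts : PTree T N).height = 1 + heights ts := by
  simp [height]
@[simp] lemma heights_nil : heights ([] : List (PTree T N)) = 0 := by simp [heights]
@[simp] lemma heights_cons (t : PTree T N) (ts) :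
    heights (t :: ts) = max t.height (heights ts) := by simp [heights]

lemma size_pos (τ : PTree T N) : 1 ≤ τ.size := by
  cases τ <;> simp

lemma size_mem_lt {c : PTree T N} {ts : List (PTree T N)} (h : c ∈ ts) (A : N) :
    c.size < (node A ts : PTree T N).size := by
  simp only [size_node]
  induction ts with
  | nil => simp at h
  | cons t ts ih =>
      rcases List.mem_cons.1 h with rfl | h
      · simp; omega
      · have := ih h
        simp at this ⊢
        omega

lemma height_le_heights {c : PTree T N} {ts : List (PTree T N)} (h : c ∈ ts) :
    c.height ≤ heights ts := by
  induction ts with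
  | nil => simp at h
  | cons t ts ih =>
      rcases List.mem_cons.1 h with rfl | h
      · simp
      · simp [Nat.le_max_right]
        exact Or.inr (ih h)

lemma heights_mem {ts : List (PTree T N)} (h : ts ≠ []) :
    ∃ c ∈ ts, c.height = heights ts := by
  induction ts with
  | nil => simp at h
  | cons t ts ih =>
      rcases eq_or_ne ts [] with rfl | hne
      · exact ⟨t, by simp⟩
      · obtain ⟨c, hc, hch⟩ := ih hne
        rcases Nat.le_total (heights ts) t.height with hle | hle
        · exact ⟨t, by simp, by simp [Nat.max_eq_left hle]⟩
        · exact ⟨c, by simp [hc], by simp [hch, Nat.max_eq_right hle]⟩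

end PTree

open PTree

variable {T : Type uT}

/-- Well-formed parse trees of a grammar. -/
inductive IsWF (g : ContextFreeGrammar T) : PTree T g.NT → Prop
  | leaf (t : T) : IsWF g (.leaf t)
  | node (r : ContextFreeRule T g.NT) (hr : r ∈ g.rules) (ts : List (PTree T g.NT))
      (hout : r.output = ts.map PTree.rootSym) (hts : ∀ t ∈ ts, IsWF g t) :
      IsWF g (.node r.input ts)

lemma IsWF.node_elim {g : ContextFreeGrammar T} {A : g.NT} {ts : List (PTree T g.NT)}
    (h : IsWF g (.node A ts)) :
    ∃ r ∈ g.rules, r.input = A ∧ r.output = ts.map PTree.rootSym ∧ ∀ t ∈ ts, IsWF g t := by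
  cases h with
  | node r hr ts hout hts => exact ⟨r, hr, rfl, hout, hts⟩

lemma derives_yields {g : ContextFreeGrammar T} {ts : List (PTree T g.NT)}
    (h : ∀ t ∈ ts, g.Derives [t.rootSym] (t.yield.map Symbol.terminal)) :
    g.Derives (ts.map PTree.rootSym) ((yields ts).map Symbol.terminal) := by
  induction ts with
  | nil => simp; rfl
  | cons t ts ih =>
      simp only [List.map_cons, yields_cons, List.map_append]
      have h1 : g.Derives (t.rootSym :: ts.map PTree.rootSym)
          (t.yield.map Symbol.terminal ++ ts.map PTree.rootSym) := by
        simpa using (h t (by simp)).append_right (ts.map PTree.rootSym)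
      exact h1.trans ((ih (fun t ht => h t (by simp [ht]))).append_left _)

lemma IsWF.derives {g : ContextFreeGrammar T} {τ : PTree T g.NT} (h : IsWF g τ) :
    g.Derives [τ.rootSym] (τ.yield.map Symbol.terminal) := by
  induction h with
  | leaf t =>
      simp only [PTree.rootSym, yield_leaf, List.map_cons, List.map_nil]
      exact Relation.ReflTransGen.refl
  | node r hr ts hout hts ih =>
      have h1 : g.Produces [Symbol.nonterminal r.input] (ts.map PTree.rootSym) := by
        refine ⟨r, hr, ?_⟩
        rw [← hout]
        exact ContextFreeRule.Rewrites.input_output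
      exact h1.trans_derives (by simpa [PTree.rootSym] using derives_yields ih)

lemma map_rootSym_leaf (w : List T) {N : Type uN} :
    (w.map (PTree.leaf : T → PTree T N)).map PTree.rootSym = w.map Symbol.terminal := by
  induction w with
  | nil => rfl
  | cons a w ih => simp only [List.map_cons, PTree.rootSym, ih]

lemma yields_map_leaf (w : List T) {N : Type uN} :
    yields (w.map (PTree.leaf : T → PTree T N)) = w := by
  induction w with
  | nil => rfl
  | cons a w ih => simp [ih]

lemma trees_of_derives {g : ContextFreeGrammar T} {l : List (Symbol T g.NT)} {w : List T}
    (h : g.Derives l (w.map Symbol.terminal)) :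
    ∃ ts : List (PTree T g.NT), ts.map PTree.rootSym = l ∧ (∀ t ∈ ts, IsWF g t) ∧
      yields ts = w := by
  induction h using Relation.ReflTransGen.head_induction_on with
  | refl =>
      refine ⟨w.map PTree.leaf, map_rootSym_leaf w, ?_, yields_map_leaf w⟩
      rintro t ht
      simp only [List.mem_map] at ht
      obtain ⟨a, -, rfl⟩ := ht
      exact IsWF.leaf a
  | head hstep hrest ih =>
      obtain ⟨ts, hroot, hwf, hy⟩ := ih
      obtain ⟨r, hr, hrw⟩ := hstep
      obtain ⟨p, q, ha, hc⟩ := hrw.exists_parts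
      rw [hc] at hroot
      obtain ⟨ts₁, tsq, hts1, hm1, hmq⟩ := List.map_eq_append_iff.1 hroot
      obtain ⟨tsp, tsr, hts2, hmp, hmr⟩ := List.map_eq_append_iff.1 hm1
      refine ⟨tsp ++ [PTree.node r.input tsr] ++ tsq, ?_, ?_, ?_⟩
      · simp only [List.map_append, hmp, hmq, List.map_cons, List.map_nil]
        rw [ha]
        rfl
      · intro t ht
        simp only [List.append_assoc, List.mem_append, List.mem_cons] at ht
        rcases ht with ht | ((rfl | h0) | ht)
        · exact hwf t (by rw [hts1, hts2]; simp [ht])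
        · exact IsWF.node r hr tsr hmr.symm
            (fun t ht => hwf t (by rw [hts1, hts2]; simp [ht]))
        · simp at h0
        · exact hwf t (by rw [hts1, hts2]; simp [ht])
      · rw [← hy, hts1, hts2]
        simp [yields_append]

end Ufs17

namespace Ufs17

open PTree

variable {T : Type uT}

/-- `σ` is an immediate child of `τ`. -/
def Child {N : Type uN} (σ τ : PTree T N) : Prop := ∃ A ts, τ = .node A ts ∧ σ ∈ ts

/-- `σ` is a descendant subtree of `τ`. -/
def Desc {N : Type uN} : PTree T N → PTree T N → Prop :=
  Relation.ReflTransGen (fun x y => Child y x)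

lemma Desc.refl {N : Type uN} (τ : PTree T N) : Desc τ τ := Relation.ReflTransGen.refl

lemma IsWF.of_child {g : ContextFreeGrammar T} {σ τ : PTree T g.NT}
    (h : IsWF g τ) (hc : Child σ τ) : IsWF g σ := by
  obtain ⟨A, ts, rfl, hmem⟩ := hc
  obtain ⟨r, hr, -, -, hts⟩ := h.node_elim
  exact hts σ hmem

lemma size_lt_of_child {N : Type uN} {σ τ : PTree T N} (hc : Child σ τ) :
    σ.size < τ.size := by
  obtain ⟨A, ts, rfl, hmem⟩ := hc
  exact PTree.size_mem_lt hmem A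

lemma size_le_of_desc {N : Type uN} {σ τ : PTree T N} (hd : Desc τ σ) :
    σ.size ≤ τ.size := by
  induction hd with
  | refl => exact le_rfl
  | tail hstep hc ih => exact le_trans (le_of_lt (size_lt_of_child hc)) ih

lemma IsWF.of_desc {g : ContextFreeGrammar T} {σ τ : PTree T g.NT}
    (h : IsWF g τ) (hd : Desc τ σ) : IsWF g σ := by
  induction hd with
  | refl => exact h
  | tail hstep hc ih => exact ih.of_child hc

lemma rootSym_nonterminal_of_desc {g : ContextFreeGrammar T} {σ τ : PTree T g.NT} {B : g.NT}
    (hd : Desc τ σ) (hστ : τ ≠ σ) (hB : σ.rootSym = .nonterminal B) :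
    ∃ A ts, τ = PTree.node A ts := by
  cases τ with
  | node A ts => exact ⟨A, ts, rfl⟩
  | leaf t =>
      exfalso
      rcases (Relation.ReflTransGen.cases_head hd) with rfl | ⟨c, hc, hrest⟩
      · exact hστ rfl
      · obtain ⟨A, ts, h', -⟩ := hc
        simp at h'

/-- Context decomposition along a descendant subtree. -/
lemma ctx_of_desc {g : ContextFreeGrammar T} {τ σ : PTree T g.NT}
    (hd : Desc τ σ) (hτ : IsWF g τ) :
    ∃ u w : List T,
      τ.yield = u ++ σ.yield ++ w ∧
      (∀ A B, τ.rootSym = .nonterminal A → σ.rootSym = .nonterminal B →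
        g.Derives [Symbol.nonterminal A]
          (u.map .terminal ++ [Symbol.nonterminal B] ++ w.map .terminal)) ∧
      (∀ σ' : PTree T g.NT, IsWF g σ' → σ'.rootSym = σ.rootSym →
        ∃ τ' : PTree T g.NT, IsWF g τ' ∧ τ'.rootSym = τ.rootSym ∧
          τ'.yield = u ++ σ'.yield ++ w ∧ τ'.size + σ.size = τ.size + σ'.size) := by
  induction hd using Relation.ReflTransGen.head_induction_on with
  | refl =>
      refine ⟨[], [], by simp, ?_, ?_⟩
      · intro A B hA hB
        rw [hA] at hB
        simp only [List.map_nil, List.nil_append, List.append_nil]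
        rw [(Symbol.nonterminal.inj hB : A = B)]
      · intro σ' hσ' hroot
        exact ⟨σ', hσ', hroot, by simp, by omega⟩
  | head hstep hrest ih =>
      rename_i a c
      obtain ⟨A, ts, rfl, hcts⟩ := hstep
      obtain ⟨r, hr, hrA, hout, hts⟩ := hτ.node_elim
      have hcwf : IsWF g c := hts c hcts
      obtain ⟨u₂, w₂, hy₂, hder₂, hsub₂⟩ := ih hcwf
      obtain ⟨ts₁, ts₂, rfl⟩ := List.append_of_mem hcts
      refine ⟨yields ts₁ ++ u₂, w₂ ++ yields ts₂, ?_, ?_, ?_⟩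
      · simp only [yield_node, yields_append, yields_cons, hy₂]
        simp [List.append_assoc]
      · intro A' B hA' hB
        obtain rfl : A = A' := by
          simp only [PTree.rootSym] at hA'
          exact Symbol.nonterminal.inj hA'
        -- c has nonterminal root
        have hcnt : ∃ C, c.rootSym = Symbol.nonterminal C := by
          rcases Relation.ReflTransGen.cases_head hrest with rfl | ⟨d, hdc, -⟩
          · exact ⟨B, hB⟩
          · obtain ⟨C, ts', rfl, -⟩ := hdc
            exact ⟨C, rfl⟩
        obtain ⟨C, hC⟩ := hcnt
        have hprod : g.Produces [Symbol.nonterminal A]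
            ((ts₁ ++ c :: ts₂).map PTree.rootSym) := by
          refine ⟨r, hr, ?_⟩
          rw [← hout, ← hrA]
          exact ContextFreeRule.Rewrites.input_output
        have hmap : (ts₁ ++ c :: ts₂).map PTree.rootSym
            = ts₁.map PTree.rootSym ++ [Symbol.nonterminal C] ++ ts₂.map PTree.rootSym := by
          simp [hC]
        have d₁ : g.Derives (ts₁.map PTree.rootSym) ((yields ts₁).map Symbol.terminal) :=
          derives_yields (fun t ht => (hts t (by simp [ht])).derives)
        have d₂ : g.Derives (ts₂.map PTree.rootSym) ((yields ts₂).map Symbol.terminal) :=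
          derives_yields (fun t ht => (hts t (by simp [ht])).derives)
        have dC : g.Derives [Symbol.nonterminal C]
            (u₂.map .terminal ++ [Symbol.nonterminal B] ++ w₂.map .terminal) :=
          hder₂ C B hC hB
        refine hprod.trans_derives ?_
        rw [hmap]
        have step1 : g.Derives
            (ts₁.map PTree.rootSym ++ [Symbol.nonterminal C] ++ ts₂.map PTree.rootSym)
            ((yields ts₁).map Symbol.terminal ++ [Symbol.nonterminal C]
              ++ ts₂.map PTree.rootSym) :=
          (d₁.append_right _).append_right _
        have step2 : g.Derives
            ((yields ts₁).map Symbol.terminal ++ [Symbol.nonterminal C]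
              ++ ts₂.map PTree.rootSym)
            ((yields ts₁).map Symbol.terminal ++ [Symbol.nonterminal C]
              ++ (yields ts₂).map Symbol.terminal) := d₂.append_left _
        have step3 : g.Derives
            ((yields ts₁).map Symbol.terminal ++ [Symbol.nonterminal C]
              ++ (yields ts₂).map Symbol.terminal)
            ((yields ts₁).map Symbol.terminal
              ++ (u₂.map .terminal ++ [Symbol.nonterminal B] ++ w₂.map .terminal)
              ++ (yields ts₂).map Symbol.terminal) := by
          have := (dC.append_left ((yields ts₁).map Symbol.terminal)).append_right
            ((yields ts₂).map Symbol.terminal)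
          simpa [List.append_assoc] using this
        refine (step1.trans (step2.trans (step3.trans ?_)))
        simp only [List.append_assoc, List.map_append, List.singleton_append, List.cons_append, List.nil_append]
        exact Relation.ReflTransGen.refl
      · intro σ' hσ' hroot
        obtain ⟨c', hc'wf, hc'root, hc'y, hc'size⟩ := hsub₂ σ' hσ' hroot
        refine ⟨PTree.node A (ts₁ ++ c' :: ts₂), ?_, ?_, ?_, ?_⟩
        · rw [← hrA]
          refine IsWF.node r hr _ ?_ ?_
          · rw [hout]
            simp [hc'root]
          · intro t ht
            simp only [List.mem_append, List.mem_cons] at ht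
            rcases ht with ht | (rfl | ht)
            · exact hts t (by simp [ht])
            · exact hc'wf
            · exact hts t (by simp [ht])
        · simp [PTree.rootSym]
        · simp only [yield_node, yields_append, yields_cons, hc'y]
          simp [List.append_assoc]
        · have h1 : sizes (ts₁ ++ c :: ts₂) = sizes ts₁ + c.size + sizes ts₂ := by
            simp [sizes_append]; omega
          have h2 : sizes (ts₁ ++ c' :: ts₂) = sizes ts₁ + c'.size + sizes ts₂ := by
            simp [sizes_append]; omega
          simp only [size_node, h1, h2]
          omega

end Ufs17

namespace Ufs17

open PTree

variable {T : Type uT}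

lemma yields_length_le {N : Type uN} (c : ℕ) (ts : List (PTree T N))
    (h : ∀ t ∈ ts, t.yield.length ≤ c) :
    (yields ts).length ≤ ts.length * c := by
  induction ts with
  | nil => simp
  | cons t ts ih =>
      simp only [yields_cons, List.length_append, List.length_cons]
      have h1 := h t (by simp)
      have h2 := ih (fun t ht => h t (by simp [ht]))
      calc t.yield.length + (yields ts).length ≤ c + ts.length * c := by omega
      _ = (ts.length + 1) * c := by ring

lemma yield_length_le {g : ContextFreeGrammar T} {M : ℕ} (hM2 : 2 ≤ M)
    (hMr : ∀ r ∈ g.rules, r.output.length ≤ M) {τ : PTree T g.NT} (h : IsWF g τ) :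
    τ.yield.length ≤ M ^ τ.height := by
  induction h with
  | leaf t => simp
  | node r hr ts hout hts ih =>
      have hlen : ts.length ≤ M := by
        have := hMr r hr
        rw [hout] at this
        simpa using this
      have hbound : ∀ t ∈ ts, t.yield.length ≤ M ^ heights ts := by
        intro t ht
        exact le_trans (ih t ht) (Nat.pow_le_pow_right (by omega) (height_le_heights ht))
      calc (PTree.node r.input ts).yield.length = (yields ts).length := by simp
      _ ≤ ts.length * M ^ heights ts := yields_length_le _ _ hbound
      _ ≤ M * M ^ heights ts := Nat.mul_le_mul_right _ hlen
      _ = M ^ (1 + heights ts) := by rw [pow_add, pow_one]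
      _ = M ^ (PTree.node r.input ts).height := by simp

lemma desc_trans {N : Type uN} {a b c : PTree T N} (h1 : Desc a b) (h2 : Desc b c) :
    Desc a c := Relation.ReflTransGen.trans h1 h2

/-- A maximal-height chain of subtrees. -/
lemma spine_ex {g : ContextFreeGrammar T} :
    ∀ (n : ℕ) (τ : PTree T g.NT), τ.size ≤ n → IsWF g τ →
    ∃ l : List (g.NT × PTree T g.NT),
      l.length = τ.height ∧
      List.Pairwise (fun a b => Desc a.2 b.2 ∧ b.2.size < a.2.size) l ∧
      (∀ pr ∈ l, Desc τ pr.2 ∧ IsWF g pr.2 ∧ pr.2.rootSym = .nonterminal pr.1 ∧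
        pr.1 ∈ g.rules.toList.map ContextFreeRule.input) ∧
      (∀ i (hi : i < l.length), (l.get ⟨i, hi⟩).2.height + i = τ.height) := by
  intro n
  induction n with
  | zero =>
      intro τ hn
      have := size_pos τ
      omega
  | succ n ih =>
      intro τ hn hwf
      cases τ with
      | leaf t => exact ⟨[], by simp, by simp, by simp, by simp⟩
      | node A ts =>
          obtain ⟨r, hr, hrA, hout, hts⟩ := hwf.node_elim
          have hAmem : A ∈ g.rules.toList.map ContextFreeRule.input := by
            simp only [List.mem_map]
            exact ⟨r, by simp [hr], hrA⟩
          rcases eq_or_ne ts [] with rfl | hne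
          · refine ⟨[(A, PTree.node A [])], by simp, by simp, ?_, ?_⟩
            · rintro pr hpr
              simp only [List.mem_singleton] at hpr
              subst hpr
              exact ⟨Desc.refl _, hwf, rfl, hAmem⟩
            · intro i hi
              simp only [List.length_singleton] at hi
              interval_cases i
              simp
          · obtain ⟨c, hcts, hch⟩ := heights_mem hne
            have hchild : Child c (PTree.node A ts) := ⟨A, ts, rfl, hcts⟩
            have hcsize : c.size < (PTree.node A ts).size := size_lt_of_child hchild
            have hcwf : IsWF g c := hts c hcts
            obtain ⟨lc, hlen, hpw, hmem, hidx⟩ := ih c (by omega) hcwf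
            have hdesc_c : ∀ pr ∈ lc, Desc (PTree.node A ts) pr.2 := by
              intro pr hpr
              exact Relation.ReflTransGen.head hchild (hmem pr hpr).1
            refine ⟨(A, PTree.node A ts) :: lc, ?_, ?_, ?_, ?_⟩
            · simp [hlen, hch]; omega
            · refine List.Pairwise.cons ?_ hpw
              intro pr hpr
              refine ⟨hdesc_c pr hpr, ?_⟩
              calc pr.2.size ≤ c.size := size_le_of_desc (hmem pr hpr).1
              _ < _ := hcsize
            · rintro pr hpr
              rcases List.mem_cons.1 hpr with rfl | hpr
              · exact ⟨Desc.refl _, hwf, rfl, hAmem⟩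
              · obtain ⟨-, h2, h3, h4⟩ := hmem pr hpr
                exact ⟨hdesc_c pr hpr, h2, h3, h4⟩
            · intro i hi
              cases i with
              | zero => simp
              | succ i =>
                  simp only [List.length_cons] at hi
                  have := hidx i (by omega)
                  simp only [List.get_cons_succ] at this ⊢
                  simp only [height_node]
                  omega

end Ufs17

namespace Ufs17

open PTree

variable {T : Type uT}

lemma le_foldr_max {l : List ℕ} {a : ℕ} (h : a ∈ l) : a ≤ l.foldr max 0 := by
  induction l with
  | nil => simp at h
  | cons b l ih =>
      rcases List.mem_cons.1 h with rfl | h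
      · simp [List.foldr_cons, le_max_left]
      · exact le_trans (ih h) (by simp [List.foldr_cons, le_max_right])

theorem cfg_pump (g : ContextFreeGrammar T) :
    ∃ p : ℕ, 1 ≤ p ∧ ∀ z ∈ g.language, p ≤ z.length →
      ∃ u v x y w : List T, z = u ++ v ++ x ++ y ++ w ∧ x.length ≤ p ∧
        1 ≤ v.length + y.length ∧ u ++ v ++ v ++ x ++ y ++ y ++ w ∈ g.language := by
  classical
  set NL : List g.NT := g.rules.toList.map ContextFreeRule.input with hNL
  set K : ℕ := NL.dedup.length with hK
  set M : ℕ := 2 ⊔ ((g.rules.toList.map (fun r => r.output.length)).foldr max 0) with hM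
  have hM2 : 2 ≤ M := le_max_left _ _
  have hMr : ∀ r ∈ g.rules, r.output.length ≤ M := by
    intro r hr
    refine le_trans (le_foldr_max ?_) (le_max_right _ _)
    exact List.mem_map.2 ⟨r, by simp [hr], rfl⟩
  refine ⟨M ^ (K+1), Nat.one_le_pow _ _ (by omega), ?_⟩
  intro z hz hzlen
  have hder : g.Derives [Symbol.nonterminal g.initial] (z.map Symbol.terminal) := hz
  obtain ⟨ts, hroot, hwfl, hyl⟩ := trees_of_derives hder
  obtain ⟨τinit, rfl⟩ : ∃ τ, ts = [τ] := by
    cases ts with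
    | nil => simp at hroot
    | cons τ rest =>
        cases rest with
        | nil => exact ⟨τ, rfl⟩
        | cons τ' rest' => simp at hroot
  have hrootτ : τinit.rootSym = Symbol.nonterminal g.initial := by simpa using hroot
  have hyτ : τinit.yield = z := by simpa using hyl
  have hwfτ : IsWF g τinit := hwfl τinit (by simp)
  -- minimal tree
  have hex : ∃ n, ∃ τ' : PTree T g.NT, IsWF g τ' ∧ τ'.rootSym = .nonterminal g.initial ∧
      τ'.yield = z ∧ τ'.size = n := ⟨τinit.size, τinit, hwfτ, hrootτ, hyτ, rfl⟩
  obtain ⟨τ₀, hτ₀wf, hτ₀root, hτ₀y, hτ₀size⟩ := Nat.find_spec hex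
  -- height bound
  have hylen : z.length ≤ M ^ τ₀.height := by
    rw [← hτ₀y]
    exact yield_length_le hM2 hMr hτ₀wf
  have hht : K + 1 ≤ τ₀.height := by
    by_contra hlt
    push_neg at hlt
    have h1 : M ^ (K+1) ≤ M ^ τ₀.height := le_trans hzlen hylen
    have h2 : M ^ τ₀.height < M ^ (K+1) :=
      Nat.pow_lt_pow_right (by omega) (by omega)
    omega
  obtain ⟨l, hlen, hpw, hmem, hidx⟩ := spine_ex τ₀.size τ₀ le_rfl hτ₀wf
  set d := l.length - (K+1) with hd
  set l' := l.drop d with hl'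
  have hl'len : l'.length = K + 1 := by
    simp only [hl', List.length_drop, hd]
    omega
  have hl'sub : ∀ pr ∈ l', pr ∈ l := fun pr hpr => List.drop_subset _ _ hpr
  have hl'h : ∀ pr ∈ l', pr.2.height ≤ K + 1 := by
    intro pr hpr
    obtain ⟨⟨i, hi⟩, hget⟩ := List.mem_iff_get.1 hpr
    have hbound : d + i < l.length := by
      rw [hl', List.length_drop] at hi
      omega
    have hgd : l.get ⟨d + i, hbound⟩ = pr := by
      rw [← hget]
      simp [hl', List.getElem_drop]
    have hidx' := hidx (d + i) hbound
    rw [hgd] at hidx'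
    omega
  -- pigeonhole
  have hmapsub : ∀ a ∈ l'.map Prod.fst, a ∈ NL := by
    intro a ha
    obtain ⟨pr, hpr, rfl⟩ := List.mem_map.1 ha
    exact (hmem pr (hl'sub pr hpr)).2.2.2
  have hcard : NL.toFinset.card = K := List.card_toFinset NL
  have hnd : ¬ (l'.map Prod.fst).Nodup := by
    intro hnd
    have h1 : (l'.map Prod.fst).toFinset.card = K + 1 := by
      rw [List.toFinset_card_of_nodup hnd]
      simp [hl'len]
    have h2 : (l'.map Prod.fst).toFinset ⊆ NL.toFinset := by
      intro a ha
      rw [List.mem_toFinset] at ha ⊢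
      exact hmapsub a ha
    have := Finset.card_le_card h2
    omega
  obtain ⟨B, hdupB⟩ := List.exists_duplicate_iff_not_nodup.2 hnd
  have hsubBB : List.Sublist [B, B] (l'.map Prod.fst) := List.duplicate_iff_sublist.1 hdupB
  obtain ⟨l'', hl''sub, hl''map⟩ := List.sublist_map_iff.1 hsubBB
  obtain ⟨p1, p2, rfl⟩ : ∃ p1 p2, l'' = [p1, p2] := by
    cases l'' with
    | nil => simp at hl''map
    | cons p1 rest =>
        cases rest with
        | nil => simp at hl''map
        | cons p2 rest2 =>
            cases rest2 with
            | nil => exact ⟨p1, p2, rfl⟩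
            | cons p3 rest3 => simp at hl''map
  have hp1B : p1.1 = B := by simp at hl''map; exact hl''map.1.symm
  have hp2B : p2.1 = B := by simp at hl''map; exact hl''map.2.symm
  have hp1l' : p1 ∈ l' := hl''sub.subset (by simp)
  have hp2l' : p2 ∈ l' := hl''sub.subset (by simp)
  have hpw'' := List.Pairwise.sublist (hl''sub.trans (List.drop_sublist d l)) hpw
  have hp12 : Desc p1.2 p2.2 ∧ p2.2.size < p1.2.size := by
    rw [List.pairwise_cons] at hpw''
    exact hpw''.1 p2 (by simp)
  obtain ⟨hdesc₁, hwf₁, hroot₁, -⟩ := hmem p1 (hl'sub p1 hp1l')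
  obtain ⟨hdesc₂', hwf₂, hroot₂, -⟩ := hmem p2 (hl'sub p2 hp2l')
  have hh₁ : p1.2.height ≤ K + 1 := hl'h p1 hp1l'
  rw [hp1B] at hroot₁
  rw [hp2B] at hroot₂
  obtain ⟨u, w, hyuw, hderuw, hsubuw⟩ := ctx_of_desc hdesc₁ hτ₀wf
  obtain ⟨v, y, hyvy, hdervy, hsubvy⟩ := ctx_of_desc hp12.1 hwf₁
  set x := p2.2.yield with hx
  have hsplit : z = u ++ v ++ x ++ y ++ w := by
    rw [← hτ₀y, hyuw, hyvy]
    simp [List.append_assoc]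
  have hxlen : x.length ≤ M ^ (K + 1) := by
    have h1 : p1.2.yield.length ≤ M ^ p1.2.height := yield_length_le hM2 hMr hwf₁
    have h2 : M ^ p1.2.height ≤ M ^ (K+1) := Nat.pow_le_pow_right (by omega) hh₁
    have h3 : x.length ≤ p1.2.yield.length := by
      rw [hyvy]
      simp
      omega
    omega
  have hvy : 1 ≤ v.length + y.length := by
    by_contra hvy0
    push_neg at hvy0
    obtain ⟨rfl, rfl⟩ : v = [] ∧ y = [] := by
      constructor <;> [skip; skip] <;>
        (first | exact List.eq_nil_of_length_eq_zero (by omega))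
    obtain ⟨τ', hτ'wf, hτ'root, hτ'y, hτ'size⟩ :=
      hsubuw p2.2 hwf₂ (hroot₂.trans hroot₁.symm)
    have hlt : τ'.size < Nat.find hex := by
      have := hp12.2
      omega
    refine Nat.find_min hex hlt ⟨τ', hτ'wf, ?_, ?_, rfl⟩
    · rw [hτ'root, hτ₀root]
    · rw [hτ'y, ← hτ₀y, hyuw, hyvy]
      simp [hx]
  refine ⟨u, v, x, y, w, hsplit, hxlen, hvy, ?_⟩
  -- pumped word
  have dA := hderuw g.initial B hτ₀root hroot₁
  have dB := hdervy B B hroot₁ hroot₂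
  have dx : g.Derives [Symbol.nonterminal B] (x.map Symbol.terminal) := by
    have := hwf₂.derives
    rwa [hroot₂] at this
  have dB2 : g.Derives [Symbol.nonterminal B]
      ((v.map Symbol.terminal ++ (v.map Symbol.terminal ++ [Symbol.nonterminal B]
        ++ y.map Symbol.terminal)) ++ y.map Symbol.terminal) := by
    refine dB.trans ?_
    have := (dB.append_left (v.map Symbol.terminal)).append_right (y.map Symbol.terminal)
    simpa [List.append_assoc] using this
  have dB3 : g.Derives [Symbol.nonterminal B]
      ((v.map Symbol.terminal ++ (v.map Symbol.terminal ++ x.map Symbol.terminal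
        ++ y.map Symbol.terminal)) ++ y.map Symbol.terminal) := by
    refine dB2.trans ?_
    have := ((dx.append_left (v.map Symbol.terminal ++ v.map Symbol.terminal)).append_right
      (y.map Symbol.terminal ++ y.map Symbol.terminal))
    simpa [List.append_assoc] using this
  show _ ∈ g.language
  rw [ContextFreeGrammar.mem_language_iff]
  have final : g.Derives [Symbol.nonterminal g.initial]
      (u.map Symbol.terminal ++ ((v.map Symbol.terminal ++ (v.map Symbol.terminal
        ++ x.map Symbol.terminal ++ y.map Symbol.terminal)) ++ y.map Symbol.terminal)
        ++ w.map Symbol.terminal) := by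
    refine dA.trans ?_
    have := (dB3.append_left (u.map Symbol.terminal)).append_right (w.map Symbol.terminal)
    simpa [List.append_assoc] using this
  simpa [List.append_assoc] using final

end Ufs17

namespace Ufs17

lemma rep2_snoc (x y : Fin 3) (n : ℕ) : rep2 x y n ++ [x, y] = rep2 x y (n + 1) := by
  induction n with
  | zero => simp [rep2_zero, rep2_succ]
  | succ n ih => rw [rep2_succ_append, ih, ← rep2_succ]

lemma rep2_reverse (x y : Fin 3) (n : ℕ) : (rep2 x y n).reverse = rep2 y x n := by
  induction n with
  | zero => simp [rep2_zero]
  | succ n ih =>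
      rw [rep2_succ]
      simp only [List.reverse_cons, ih, List.append_assoc]
      simpa using rep2_snoc y x n

lemma rep2_get_even (x y : Fin 3) {n k : ℕ} (h : k < n) : (rep2 x y n)[2 * k]? = some x := by
  induction k generalizing n with
  | zero =>
      obtain ⟨n, rfl⟩ : ∃ m, n = m + 1 := ⟨n - 1, by omega⟩
      simp [rep2_succ]
  | succ k ih =>
      obtain ⟨n, rfl⟩ : ∃ m, n = m + 1 := ⟨n - 1, by omega⟩
      rw [rep2_succ]
      rw [show 2 * (k + 1) = (2 * k) + 1 + 1 by omega]
      simpa using ih (by omega)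

lemma rep2_get_odd (x y : Fin 3) {n k : ℕ} (h : k < n) : (rep2 x y n)[2 * k + 1]? = some y := by
  induction k generalizing n with
  | zero =>
      obtain ⟨n, rfl⟩ : ∃ m, n = m + 1 := ⟨n - 1, by omega⟩
      simp [rep2_succ]
  | succ k ih =>
      obtain ⟨n, rfl⟩ : ∃ m, n = m + 1 := ⟨n - 1, by omega⟩
      rw [rep2_succ]
      rw [show 2 * (k + 1) + 1 = (2 * k + 1) + 1 + 1 by omega]
      simpa using ih (by omega)

lemma w17_assoc (r s t q : ℕ) :
    w17 r s t q = [0, 0] ++ (rep2 0 1 r ++ (rep2 0 2 s ++ ([0, 0] ++ (rep2 1 0 t ++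
      (rep2 2 0 q ++ [0, 0, 0]))))) := by
  simp [w17, rep2, List.append_assoc]

lemma w17_length (r s t q : ℕ) : (w17 r s t q).length = 7 + 2*r + 2*s + 2*t + 2*q := by
  rw [w17_assoc]
  simp [rep2_length]
  omega

lemma w17_reverse (r s t q : ℕ) :
    (w17 r s t q).reverse = [0, 0, 0] ++ (rep2 0 2 q ++ (rep2 0 1 t ++ ([0, 0] ++
      (rep2 2 0 s ++ (rep2 1 0 r ++ [0, 0]))))) := by
  rw [w17_assoc]
  simp only [List.reverse_append, rep2_reverse, List.append_assoc]
  norm_num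

-- position lemmas (front)
lemma w17_get_ab_b {r s t q k : ℕ} (hk : k < r) : (w17 r s t q)[2 + 2*k + 1]? = some 1 := by
  rw [w17_assoc, List.getElem?_append_right (by simp; omega)]
  simp only [List.length_cons, List.length_nil]
  rw [show 2 + 2*k + 1 - 2 = 2*k + 1 by omega,
    List.getElem?_append_left (by rw [rep2_length]; omega)]
  exact rep2_get_odd 0 1 hk

lemma w17_get_ac_c {r s t q k : ℕ} (hk : k < s) :
    (w17 r s t q)[2 + 2*r + 2*k + 1]? = some 2 := by
  rw [w17_assoc, List.getElem?_append_right (by simp; omega)]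
  simp only [List.length_cons, List.length_nil]
  rw [show 2 + 2*r + 2*k + 1 - 2 = 2*r + (2*k + 1) by omega,
    List.getElem?_append_right (by rw [rep2_length]; omega), rep2_length,
    show 2*r + (2*k+1) - 2*r = 2*k+1 by omega,
    List.getElem?_append_left (by rw [rep2_length]; omega)]
  exact rep2_get_odd 0 2 hk

lemma w17_get_mid {r s t q : ℕ} : (w17 r s t q)[2 + 2*r + 2*s + 1]? = some 0 := by
  rw [w17_assoc, List.getElem?_append_right (by simp; omega)]
  simp only [List.length_cons, List.length_nil]
  rw [show 2 + 2*r + 2*s + 1 - 2 = 2*r + (2*s + 1) by omega,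
    List.getElem?_append_right (by rw [rep2_length]; omega), rep2_length,
    show 2*r + (2*s+1) - 2*r = 2*s + 1 by omega,
    List.getElem?_append_right (by rw [rep2_length]; omega), rep2_length,
    show 2*s + 1 - 2*s = 1 by omega]
  rw [List.getElem?_append_left (by simp)]
  rfl

-- position lemmas (reverse side); the reverse of `w17 r s t q` has shape
-- aaa (ca-rev)^q (ba-rev)^t aa ...
lemma w17_rget_ca_c {r s t q k : ℕ} (hk : k < q) :
    (w17 r s t q).reverse[4 + 2*k]? = some 2 := by
  rw [w17_reverse, List.getElem?_append_right (by simp; omega)]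
  simp only [List.length_cons, List.length_nil]
  rw [show 4 + 2*k - 3 = 2*k + 1 by omega,
    List.getElem?_append_left (by rw [rep2_length]; omega)]
  exact rep2_get_odd 0 2 hk

lemma w17_rget_ba_b {r s t q k : ℕ} (hk : k < t) :
    (w17 r s t q).reverse[4 + 2*q + 2*k]? = some 1 := by
  rw [w17_reverse, List.getElem?_append_right (by simp; omega)]
  simp only [List.length_cons, List.length_nil]
  rw [show 4 + 2*q + 2*k - 3 = 2*q + (2*k + 1) by omega,
    List.getElem?_append_right (by rw [rep2_length]; omega), rep2_length,
    show 2*q + (2*k+1) - 2*q = 2*k+1 by omega,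
    List.getElem?_append_left (by rw [rep2_length]; omega)]
  exact rep2_get_odd 0 1 hk

lemma w17_rget_mid {r s t q : ℕ} : (w17 r s t q).reverse[4 + 2*q + 2*t]? = some 0 := by
  rw [w17_reverse, List.getElem?_append_right (by simp; omega)]
  simp only [List.length_cons, List.length_nil]
  rw [show 4 + 2*q + 2*t - 3 = 2*q + (2*t + 1) by omega,
    List.getElem?_append_right (by rw [rep2_length]; omega), rep2_length,
    show 2*q + (2*t+1) - 2*q = 2*t + 1 by omega,
    List.getElem?_append_right (by rw [rep2_length]; omega), rep2_length,
    show 2*t + 1 - 2*t = 1 by omega]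
  rw [List.getElem?_append_left (by simp)]
  rfl

end Ufs17

namespace Ufs17

theorem part2 :
    ¬ Language.IsContextFree {w : List (Fin 3) | ∃ r s, 1 ≤ r ∧ 1 ≤ s ∧ w = w17 r s r s} := by
  rintro ⟨g, hg⟩
  obtain ⟨p, hp1, hpump⟩ := cfg_pump g
  set m := p + 2 with hm
  have hmem : w17 m m m m ∈ g.language := by
    rw [hg]; exact ⟨m, m, by omega, by omega, rfl⟩
  have hlenz : (w17 m m m m).length = 7 + 8 * m := by rw [w17_length]; ring
  obtain ⟨u, v, x, y, w, hsplit, hxlen, hvy, hpumped⟩ := hpump _ hmem (by rw [hlenz]; omega)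
  rw [hg] at hpumped
  obtain ⟨R, S, hR, hS, hz2⟩ := hpumped
  have hupre : ∀ n, n < (u ++ v).length → (w17 m m m m)[n]? = (w17 R S R S)[n]? := by
    intro n hn
    rw [← hz2]
    have e1 : w17 m m m m = (u ++ v) ++ (x ++ (y ++ w)) := by
      rw [hsplit]; simp [List.append_assoc]
    have e2 : u ++ v ++ v ++ x ++ y ++ y ++ w = (u ++ v) ++ (v ++ (x ++ (y ++ (y ++ w)))) := by
      simp [List.append_assoc]
    rw [e1, e2, List.getElem?_append_left hn, List.getElem?_append_left hn]
  have husuf : ∀ n, n < (y ++ w).length →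
      (w17 m m m m).reverse[n]? = (w17 R S R S).reverse[n]? := by
    intro n hn
    rw [← hz2]
    have e1 : w17 m m m m = (u ++ v ++ x) ++ (y ++ w) := by
      rw [hsplit]; simp [List.append_assoc]
    have e2 : u ++ v ++ v ++ x ++ y ++ y ++ w = (u ++ v ++ v ++ x ++ y) ++ (y ++ w) := by
      simp [List.append_assoc]
    rw [e1, e2, List.reverse_append (as := u ++ v ++ x) (bs := y ++ w),
      List.reverse_append (as := u ++ v ++ v ++ x ++ y) (bs := y ++ w),
      List.getElem?_append_left (by simp only [List.length_reverse, List.length_append] at hn ⊢; omega),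
      List.getElem?_append_left (by simp only [List.length_reverse, List.length_append] at hn ⊢; omega)]
  have hsum : (u ++ v).length + (y ++ w).length + x.length = 7 + 8 * m := by
    have h := congrArg List.length hsplit
    rw [hlenz] at h
    simp only [List.length_append] at h ⊢
    omega
  have hz2len : 7 + 4 * (R + S) = 7 + 8 * m + (v.length + y.length) := by
    have h := congrArg List.length hz2
    simp only [List.length_append] at h
    rw [w17_length] at h
    have h2 := congrArg List.length hsplit
    rw [hlenz] at h2
    simp only [List.length_append] at h2
    omega
  have hxm : x.length ≤ m := by omega
  -- prefix determines R
  have hprefR : 4 + 2 * m ≤ (u ++ v).length → R = m := by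
    intro hile
    rcases Nat.lt_trichotomy R m with hlt | he | hgt
    · exfalso
      have h1 : (w17 m m m m)[2 + 2*R + 1]? = some 1 := w17_get_ab_b hlt
      have h2 : (w17 R S R S)[2 + 2*R + 1]? = some 2 := by
        have h := w17_get_ac_c (r := R) (s := S) (t := R) (q := S) (k := 0) (show 0 < S by omega)
        rw [show 2 + 2*R + 2*0 + 1 = 2 + 2*R + 1 from by omega] at h
        exact h
      have h3 := hupre (2 + 2*R + 1) (by omega)
      rw [h1, h2] at h3
      exact absurd h3 (by decide)
    · exact he
    · exfalso
      have h1 : (w17 m m m m)[2 + 2*m + 1]? = some 2 := by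
        have h := w17_get_ac_c (r := m) (s := m) (t := m) (q := m) (k := 0) (by omega)
        rw [show 2 + 2*m + 2*0 + 1 = 2 + 2*m + 1 from by omega] at h
        exact h
      have h2 : (w17 R S R S)[2 + 2*m + 1]? = some 1 := w17_get_ab_b hgt
      have h3 := hupre (2 + 2*m + 1) (by omega)
      rw [h1, h2] at h3
      exact absurd h3 (by decide)
  -- prefix determines S (given R = m)
  have hprefS : R = m → 4 + 4 * m ≤ (u ++ v).length → S = m := by
    intro hRm hile
    rcases Nat.lt_trichotomy S m with hlt | he | hgt
    · exfalso
      have h1 : (w17 m m m m)[2 + 2*m + 2*S + 1]? = some 2 := w17_get_ac_c hlt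
      have h2 : (w17 R S R S)[2 + 2*R + 2*S + 1]? = some 0 := w17_get_mid
      rw [show (2 + 2*R + 2*S + 1) = (2 + 2*m + 2*S + 1) from by omega] at h2
      have h3 := hupre (2 + 2*m + 2*S + 1) (by omega)
      rw [h1, h2] at h3
      exact absurd h3 (by decide)
    · exact he
    · exfalso
      have h1 : (w17 m m m m)[2 + 2*m + 2*m + 1]? = some 0 := w17_get_mid
      have h2 : (w17 R S R S)[2 + 2*m + 2*m + 1]? = some 2 := by
        have h := w17_get_ac_c (r := R) (s := S) (t := R) (q := S) (k := m) hgt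
        rw [show 2 + 2*R + 2*m + 1 = 2 + 2*m + 2*m + 1 from by omega] at h
        exact h
      have h3 := hupre (2 + 2*m + 2*m + 1) (by omega)
      rw [h1, h2] at h3
      exact absurd h3 (by decide)
  -- suffix determines S
  have hsufS : 5 + 2 * m ≤ (y ++ w).length → S = m := by
    intro hLle
    rcases Nat.lt_trichotomy S m with hlt | he | hgt
    · exfalso
      have h1 : (w17 m m m m).reverse[4 + 2*S]? = some 2 := w17_rget_ca_c hlt
      have h2 : (w17 R S R S).reverse[4 + 2*S]? = some 1 := by
        have h := w17_rget_ba_b (r := R) (s := S) (t := R) (q := S) (k := 0) (show 0 < R by omega)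
        rw [show 4 + 2*S + 2*0 = 4 + 2*S from by omega] at h
        exact h
      have h3 := husuf (4 + 2*S) (by omega)
      rw [h1, h2] at h3
      exact absurd h3 (by decide)
    · exact he
    · exfalso
      have h1 : (w17 m m m m).reverse[4 + 2*m]? = some 1 := by
        have h := w17_rget_ba_b (r := m) (s := m) (t := m) (q := m) (k := 0) (by omega)
        rw [show 4 + 2*m + 2*0 = 4 + 2*m from by omega] at h
        exact h
      have h2 : (w17 R S R S).reverse[4 + 2*m]? = some 2 := w17_rget_ca_c hgt
      have h3 := husuf (4 + 2*m) (by omega)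
      rw [h1, h2] at h3
      exact absurd h3 (by decide)
  -- suffix determines R (given S = m)
  have hsufR : S = m → 5 + 4 * m ≤ (y ++ w).length → R = m := by
    intro hSm hLle
    rcases Nat.lt_trichotomy R m with hlt | he | hgt
    · exfalso
      have h1 : (w17 m m m m).reverse[4 + 2*m + 2*R]? = some 1 := w17_rget_ba_b hlt
      have h2 : (w17 R S R S).reverse[4 + 2*S + 2*R]? = some 0 := w17_rget_mid
      rw [show (4 + 2*S + 2*R) = (4 + 2*m + 2*R) from by omega] at h2
      have h3 := husuf (4 + 2*m + 2*R) (by omega)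
      rw [h1, h2] at h3
      exact absurd h3 (by decide)
    · exact he
    · exfalso
      have h1 : (w17 m m m m).reverse[4 + 2*m + 2*m]? = some 0 := w17_rget_mid
      have h2 : (w17 R S R S).reverse[4 + 2*m + 2*m]? = some 1 := by
        have h := w17_rget_ba_b (r := R) (s := S) (t := R) (q := S) (k := m) hgt
        rw [show 4 + 2*S + 2*m = 4 + 2*m + 2*m from by omega] at h
        exact h
      have h3 := husuf (4 + 2*m + 2*m) (by omega)
      rw [h1, h2] at h3
      exact absurd h3 (by decide)
  have hRS : R = m ∧ S = m := by
    by_cases hi4 : 4 + 4 * m ≤ (u ++ v).length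
    · have hRm := hprefR (by omega)
      exact ⟨hRm, hprefS hRm hi4⟩
    · have hSm := hsufS (by omega)
      by_cases hi2 : 4 + 2 * m ≤ (u ++ v).length
      · exact ⟨hprefR hi2, hSm⟩
      · exact ⟨hsufR hSm (by omega), hSm⟩
  obtain ⟨hRm, hSm⟩ := hRS
  subst hRm
  subst hSm
  omega

end Ufs17

/-- `ufs(L17)` intersected with `aa(ab)⁺(ac)⁺aa(ba)⁺(ca)⁺aaa` equals
`{ aa (ab)^r (ac)^s aa (ba)^r (ca)^s aaa : r, s ≥ 1 }`, which is not context-free;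
hence `ufs` of a regular language need not be context-free. -/
theorem stmt17 :
    Set.inter (ufs L17)
        {w | ∃ r s t q, 1 ≤ r ∧ 1 ≤ s ∧ 1 ≤ t ∧ 1 ≤ q ∧ w = w17 r s t q} =
      {w | ∃ r s, 1 ≤ r ∧ 1 ≤ s ∧ w = w17 r s r s} ∧
    ¬ Language.IsContextFree {w | ∃ r s, 1 ≤ r ∧ 1 ≤ s ∧ w = w17 r s r s} :=
  ⟨Ufs17.part1, Ufs17.part2⟩
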